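/- Let τ = {T; M, M, K} be a passive selfadjoint system with T = [[D, C], [C*, F]] a selfadjoint contraction on M ⊕ K, and assume τ is minimal, i.e. T is M-simple: span{Tⁿh : n ≥ 0, h ∈ M} is dense in M ⊕ K. If the transfer function Ω(z) = D + zC(I − zF)⁻¹C* takes unitary values at every point ξ of the unit circle with ξ ≠ ±1 (i.e. Ω is inner), then T is unitary. -/

import Mathlib

open Complex ContinuousLinearMap

noncomputable section

variable {M K : Type*} [NormedAddCommGroup M] [InnerProductSpace ℂ M] [CompleteSpace M]
  [TopologicalSpace.SeparableSpace M]
  [NormedAddCommGroup K] [InnerProductSpace ℂ K] [CompleteSpace K]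
  [TopologicalSpace.SeparableSpace K]

/-- The domain `Z = ℂ ∖ ((−∞,−1] ∪ [1,+∞))`. -/
def Zdom : Set ℂ := {z : ℂ | z ∉ (fun x : ℝ => (x : ℂ)) '' (Set.Iic (-1) ∪ Set.Ici 1)}

/-- The `2×2` block operator `[[D, C], [B, F]]` on the Hilbert direct sum `M ⊕ K`. -/
def blockOp (D : M →L[ℂ] M) (C : K →L[ℂ] M) (B : M →L[ℂ] K) (F : K →L[ℂ] K) :
    WithLp 2 (M × K) →L[ℂ] WithLp 2 (M × K) :=
  ((WithLp.prodContinuousLinearEquiv 2 ℂ M K).symm : (M × K) →L[ℂ] WithLp 2 (M × K)) ∘L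
    ((D ∘L ContinuousLinearMap.fst ℂ M K + C ∘L ContinuousLinearMap.snd ℂ M K).prod
      (B ∘L ContinuousLinearMap.fst ℂ M K + F ∘L ContinuousLinearMap.snd ℂ M K)) ∘L
    ((WithLp.prodContinuousLinearEquiv 2 ℂ M K) : WithLp 2 (M × K) →L[ℂ] (M × K))

/-- The canonical embedding of `M` into the Hilbert direct sum `M ⊕ K`. -/
def inlM : M →L[ℂ] WithLp 2 (M × K) :=
  ((WithLp.prodContinuousLinearEquiv 2 ℂ M K).symm : (M × K) →L[ℂ] WithLp 2 (M × K)) ∘L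
    ContinuousLinearMap.inl ℂ M K

/-!
For `m ∈ M` and `z ∈ Z` put `h(z) = (m, z (1 - zF)⁻¹ C* m)`. Then
`T h(z) = (Ω(z) m, (1 - zF)⁻¹ C* m)`, so at a point `ξ` of the unit circle, where `Ω(ξ)` is
isometric, `‖T h(ξ)‖ = ‖h(ξ)‖`; for a selfadjoint contraction this forces `T² h(ξ) = h(ξ)`.
The map `z ↦ (T² - 1) h(z)` is holomorphic on the connected domain `Z` (the spectrum of `F`
lies in `[-1, 1]`) and vanishes on an arc of the circle, so it vanishes at `z = 0`, where
`h(0) = (m, 0)`. Hence `T²` fixes `M`, and so the dense span of the `Tⁿ M`; thus `T² = 1`, and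
the selfadjoint `T` is unitary.
-/

open Filter Topology Real

lemma mem_Zdom_iff {z : ℂ} : z ∈ Zdom ↔ z.im ≠ 0 ∨ |z.re| < 1 := by
  simp only [Zdom, Set.mem_ofPred_eq, Set.mem_image, Set.mem_union, Set.mem_Iic, Set.mem_Ici,
    not_exists, not_and]
  constructor
  · intro h
    by_contra! hz
    refine h z.re ?_ (Complex.ext rfl hz.1.symm)
    rcases le_abs'.mp hz.2 with h1 | h1 <;> [left; right] <;> linarith
  · rintro hz x hx rfl
    simp only [ofReal_im, ne_eq, not_true_eq_false, ofReal_re, false_or] at hz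
    rcases hx with hx | hx <;> linarith [abs_lt.mp hz]

lemma isOpen_Zdom : IsOpen Zdom :=
  isOpen_compl_iff.mpr <|
    Complex.isometry_ofReal.isClosedEmbedding.isClosedMap _ (isClosed_Iic.union isClosed_Ici)

lemma isPreconnected_Zdom : IsPreconnected Zdom := by
  have hstar : StarConvex ℝ 0 Zdom := by
    intro z hz a t _ ht _
    rw [smul_zero, zero_add, mem_Zdom_iff] at *
    rcases hz with hz | hz
    · rcases ht.eq_or_lt with rfl | ht
      · simp
      · left; simpa [ht.ne'] using hz
    · right
      simp only [real_smul, mul_re, ofReal_re, ofReal_im, zero_mul, sub_zero, abs_mul]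
      nlinarith [abs_nonneg z.re, abs_of_nonneg ht]
  exact (hstar.isPathConnected (by simp [mem_Zdom_iff])).isConnected.isPreconnected

lemma mem_Zdom_of_norm_eq_one {ξ : ℂ} (hξ : ‖ξ‖ = 1) (h1 : ξ ≠ 1) (h2 : ξ ≠ -1) : ξ ∈ Zdom := by
  refine mem_Zdom_iff.mpr (Or.inl fun him => ?_)
  have hξre : ξ = ξ.re := Complex.ext rfl (by simp [him])
  rw [hξre, norm_real, Real.norm_eq_abs] at hξ
  rcases abs_eq zero_le_one |>.mp hξ with h | h
  · exact h1 (by rw [hξre, h]; simp)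
  · exact h2 (by rw [hξre, h]; simp)

lemma mul_ofReal_ne_one_of_mem_Zdom {z : ℂ} (hz : z ∈ Zdom) {t : ℝ} (ht : |t| ≤ 1) :
    z * t ≠ 1 := by
  intro h
  have him : z.im * t = 0 := by simpa using congrArg im h
  have hre : z.re * t = 1 := by simpa using congrArg re h
  have ht0 : t ≠ 0 := by rintro rfl; simp at hre
  rcases mem_Zdom_iff.mp hz with hz | hz
  · exact hz (by simpa [ht0] using him)
  · have : |z.re * t| < 1 := by
      rw [abs_mul]; nlinarith [abs_nonneg z.re, abs_nonneg t]
    rw [hre] at this; norm_num at this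

lemma frequently_nhdsNE_I_norm_eq_one : ∃ᶠ z in 𝓝[≠] I, ‖z‖ = 1 ∧ z ≠ 1 ∧ z ≠ -1 := by
  set γ : ℝ → ℂ := fun t => exp (t * I)
  have hγ : γ (π / 2) = I := by simp [γ, exp_mul_I, ← ofReal_cos, ← ofReal_sin]
  have harc : ∀ᶠ t in 𝓝[>] (π / 2), (γ t).re < 0 ∧ 0 < (γ t).im := by
    filter_upwards [Ioo_mem_nhdsGT (by linarith [pi_pos] : π / 2 < π)] with t ht
    simp only [γ, exp_ofReal_mul_I_re, exp_ofReal_mul_I_im]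
    exact ⟨cos_neg_of_pi_div_two_lt_of_lt ht.1 (by linarith [ht.2, pi_pos]),
      sin_pos_of_pos_of_lt_pi (by linarith [ht.1, pi_pos]) ht.2⟩
  have hlim : Tendsto γ (𝓝[>] (π / 2)) (𝓝[≠] I) := by
    refine tendsto_nhdsWithin_iff.mpr ⟨?_, harc.mono fun t ht => ?_⟩
    · rw [← hγ]
      exact ((by fun_prop : Continuous γ).tendsto _).mono_left nhdsWithin_le_nhds
    · exact ne_of_apply_ne re (by simpa using ht.1.ne)
  exact hlim.frequently (harc.mono fun t ht => ⟨norm_exp_ofReal_mul_I t,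
    fun h => by simp [h] at ht, fun h => by simp [h] at ht⟩).frequently

lemma eqOn_zero_Zdom_of_forall_norm_eq_one {V : Type*} [NormedAddCommGroup V] [NormedSpace ℂ V]
    [CompleteSpace V] {f : ℂ → V} (hf : DifferentiableOn ℂ f Zdom)
    (h : ∀ ξ : ℂ, ‖ξ‖ = 1 → ξ ≠ 1 → ξ ≠ -1 → f ξ = 0) : Set.EqOn f 0 Zdom :=
  (hf.analyticOnNhd isOpen_Zdom).eqOn_zero_of_preconnected_of_frequently_eq_zero
    isPreconnected_Zdom (mem_Zdom_iff.mpr (Or.inl (by simp)))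
    (frequently_nhdsNE_I_norm_eq_one.mono fun ξ hξ => h ξ hξ.1 hξ.2.1 hξ.2.2)

lemma IsSelfAdjoint.isUnit_one_sub_smul_of_mem_Zdom {A : Type*} [CStarAlgebra A] {a : A}
    (ha : IsSelfAdjoint a) (ha1 : ‖a‖ ≤ 1) {z : ℂ} (hz : z ∈ Zdom) : IsUnit (1 - z • a) := by
  rcases subsingleton_or_nontrivial A with _ | _
  · exact isUnit_of_subsingleton _
  rcases eq_or_ne z 0 with rfl | hz0
  · simp
  let u := Units.mk0 z hz0
  suffices hu : IsUnit (u⁻¹ • (1 : A) - a) by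
    rwa [IsUnit.smul_sub_iff_sub_inv_smul, inv_inv u] at hu
  rw [Units.smul_def, Units.val_inv_eq_inv_val, Units.val_mk0, ← Algebra.algebraMap_eq_smul_one,
    ← spectrum.notMem_iff]
  intro hmem
  have hre : z⁻¹ = (z⁻¹).re := ha.mem_spectrum_eq_re hmem
  have hle : |(z⁻¹).re| ≤ 1 := by
    rw [← Real.norm_eq_abs, ← norm_real, ← hre]
    exact (spectrum.norm_le_norm_of_mem hmem).trans ha1
  exact mul_ofReal_ne_one_of_mem_Zdom hz hle (by rw [← hre, mul_inv_cancel₀ hz0])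

lemma ContinuousLinearMap.adjoint_apply_apply_of_norm_apply_eq {𝕜 H : Type*} [RCLike 𝕜]
    [NormedAddCommGroup H] [InnerProductSpace 𝕜 H] [CompleteSpace H] {T : H →L[𝕜] H}
    (hT : ‖T‖ ≤ 1) {x : H} (hx : ‖T x‖ = ‖x‖) : adjoint T (T x) = x := by
  have hle : ‖adjoint T (T x)‖ ≤ ‖T x‖ := by
    have hT' : ‖adjoint T‖ ≤ 1 := by rwa [LinearIsometryEquiv.norm_map]
    simpa using (adjoint T).le_of_opNorm_le hT' (T x)
  have hinner : RCLike.re (inner 𝕜 (adjoint T (T x)) x) = ‖x‖ ^ 2 := by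
    rw [adjoint_inner_left, ← hx, inner_self_eq_norm_sq]
  have hsq : ‖adjoint T (T x) - x‖ ^ 2 = 0 := by
    refine le_antisymm ?_ (sq_nonneg _)
    rw [@norm_sub_sq 𝕜, hinner]
    nlinarith [norm_nonneg (adjoint T (T x)), norm_nonneg (T x)]
  exact sub_eq_zero.mp (norm_eq_zero.mp (pow_eq_zero_iff two_ne_zero |>.mp hsq))

section BlockOperator

variable {E H : Type*} [NormedAddCommGroup E] [InnerProductSpace ℂ E]
  [NormedAddCommGroup H] [InnerProductSpace ℂ H]
  (D : E →L[ℂ] E) (C : H →L[ℂ] E) (B : E →L[ℂ] H) (F : H →L[ℂ] H)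

lemma blockOp_toLp (x : E) (k : H) :
    blockOp D C B F (WithLp.toLp 2 (x, k)) = WithLp.toLp 2 (D x + C k, B x + F k) := rfl

lemma norm_le_norm_blockOp : ‖F‖ ≤ ‖blockOp D C B F‖ := by
  refine opNorm_le_bound _ (norm_nonneg (blockOp D C B F)) fun k => ?_
  calc ‖F k‖ ≤ ‖blockOp D C B F (WithLp.toLp 2 (0, k))‖ := by
        simpa [blockOp_toLp] using WithLp.norm_snd_le (x := blockOp D C B F (WithLp.toLp 2 (0, k)))
    _ ≤ ‖blockOp D C B F‖ * ‖k‖ := by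
        simpa [WithLp.norm_toLp_snd] using (blockOp D C B F).le_opNorm (WithLp.toLp 2 (0, k))

def transferFn (z : ℂ) : E →L[ℂ] E := D + z • (C ∘L Ring.inverse (1 - z • F) ∘L B)

def inputStateVec (z : ℂ) (x : E) : WithLp 2 (E × H) :=
  WithLp.toLp 2 (x, z • Ring.inverse (1 - z • F) (B x))

lemma blockOp_apply_inputStateVec {z : ℂ} (hz : IsUnit (1 - z • F)) (x : E) :
    blockOp D C B F (inputStateVec B F z x) =
      WithLp.toLp 2 (transferFn D C B F z x, Ring.inverse (1 - z • F) (B x)) := by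
  have hk : B x + z • F (Ring.inverse (1 - z • F) (B x)) = Ring.inverse (1 - z • F) (B x) := by
    have h : Ring.inverse (1 - z • F) (B x) - z • F (Ring.inverse (1 - z • F) (B x)) = B x := by
      simpa using congrArg (· (B x)) (Ring.mul_inverse_cancel _ hz)
    exact (sub_eq_iff_eq_add.mp h).symm
  rw [inputStateVec, blockOp_toLp, map_smul, map_smul, hk]
  rfl

lemma norm_blockOp_apply_inputStateVec {z : ℂ} (hz : IsUnit (1 - z • F)) (hz1 : ‖z‖ = 1) {x : E}
    (hx : ‖transferFn D C B F z x‖ = ‖x‖) :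
    ‖blockOp D C B F (inputStateVec B F z x)‖ = ‖inputStateVec B F z x‖ := by
  rw [blockOp_apply_inputStateVec D C B F hz, inputStateVec, WithLp.prod_norm_eq_of_L2,
    WithLp.prod_norm_eq_of_L2]
  simp [norm_smul, hz1, hx]

lemma inputStateVec_zero (x : E) : inputStateVec B F 0 x = inlM x := by
  simp only [inputStateVec, zero_smul]
  rfl

lemma differentiableOn_inputStateVec [CompleteSpace H] {U : Set ℂ}
    (hU : ∀ z ∈ U, IsUnit (1 - z • F)) (x : E) :
    DifferentiableOn ℂ (fun z => inputStateVec B F z x) U := by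
  intro z hz
  have hR : DifferentiableAt ℂ (fun z : ℂ => Ring.inverse (1 - z • F)) z :=
    (by fun_prop : DifferentiableAt ℂ (fun z : ℂ => 1 - z • F) z).inverse (hU z hz)
  have hk : DifferentiableAt ℂ (fun z : ℂ => (x, z • Ring.inverse (1 - z • F) (B x))) z := by
    fun_prop
  exact ((WithLp.prodContinuousLinearEquiv 2 ℂ E H).symm.differentiableAt.comp z
    hk).differentiableWithinAt

lemma blockOp_sq_apply_inputStateVec [CompleteSpace E] [CompleteSpace H]
    (hT : IsSelfAdjoint (blockOp D C B F)) (hT1 : ‖blockOp D C B F‖ ≤ 1) {z : ℂ}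
    (hz : IsUnit (1 - z • F)) (hz1 : ‖z‖ = 1) {x : E} (hx : ‖transferFn D C B F z x‖ = ‖x‖) :
    (blockOp D C B F ^ 2) (inputStateVec B F z x) = inputStateVec B F z x := by
  have h := adjoint_apply_apply_of_norm_apply_eq hT1
    (norm_blockOp_apply_inputStateVec D C B F hz hz1 hx)
  rwa [hT.adjoint_eq] at h

end BlockOperator

lemma ContinuousLinearMap.eq_one_of_commute_of_dense_span {R V ι : Type*} [Semiring R]
    [TopologicalSpace V] [AddCommMonoid V] [Module R V] [T2Space V] {T A : V →L[R] V}
    (hAT : Commute A T) {v : ι → V} (hv : ∀ i, A (v i) = v i)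
    (hdense : Dense (Submodule.span R (Set.range fun p : ℕ × ι => (T ^ p.1) (v p.2)) : Set V)) :
    A = 1 := by
  refine ext_on hdense ?_
  rintro _ ⟨⟨n, i⟩, rfl⟩
  calc A ((T ^ n) (v i)) = (T ^ n) (A (v i)) := congr($((hAT.pow_right n).eq) (v i))
    _ = (T ^ n) (v i) := by rw [hv]

theorem minimal_inner_implies_conservative_general (D : M →L[ℂ] M) (C : K →L[ℂ] M) (F : K →L[ℂ] K)
    (hF : IsSelfAdjoint F)
    (hTsa : IsSelfAdjoint (blockOp D C (adjoint C) F))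
    (hTcontr : ‖blockOp D C (adjoint C) F‖ ≤ 1)
    (hmin : Dense (Submodule.span ℂ
      (Set.range fun p : ℕ × M => ((blockOp D C (adjoint C) F) ^ p.1) (inlM p.2)) :
        Set (WithLp 2 (M × K))))
    (hinner : ∀ ξ : ℂ, ‖ξ‖ = 1 → ξ ≠ 1 → ξ ≠ -1 →
      D + ξ • (C ∘L Ring.inverse ((1 : K →L[ℂ] K) - ξ • F) ∘L adjoint C) ∈
        unitary (M →L[ℂ] M)) :
    blockOp D C (adjoint C) F ∈ unitary (WithLp 2 (M × K) →L[ℂ] WithLp 2 (M × K)) := by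
  set T := blockOp D C (adjoint C) F
  have hunit : ∀ z ∈ Zdom, IsUnit (1 - z • F) := fun z hz =>
    hF.isUnit_one_sub_smul_of_mem_Zdom ((norm_le_norm_blockOp D C (adjoint C) F).trans hTcontr) hz
  have hfix : ∀ m : M, (T ^ 2) (inlM m) = inlM m := by
    intro m
    let S : WithLp 2 (M × K) →L[ℂ] WithLp 2 (M × K) := T ^ 2 - 1
    have hzero := eqOn_zero_Zdom_of_forall_norm_eq_one
      (f := S ∘ fun z => inputStateVec (adjoint C) F z m)
      (S.differentiable.comp_differentiableOn
        (differentiableOn_inputStateVec (adjoint C) F hunit m))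
      (fun ξ hξ h1 h2 => by
        simpa [S, sub_eq_zero] using blockOp_sq_apply_inputStateVec D C (adjoint C) F hTsa hTcontr
          (hunit ξ (mem_Zdom_of_norm_eq_one hξ h1 h2)) hξ
          (norm_map_of_mem_unitary (hinner ξ hξ h1 h2) m))
    have h0 : (0 : ℂ) ∈ Zdom := mem_Zdom_iff.mpr (Or.inr (by simp))
    simpa [S, inputStateVec_zero, sub_eq_zero] using hzero h0
  have hT2 : T ^ 2 = 1 := eq_one_of_commute_of_dense_span ((Commute.refl T).pow_left 2) hfix hmin
  rw [Unitary.mem_iff, hTsa.star_eq, ← sq, hT2]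
  exact ⟨rfl, rfl⟩

/-- Let `τ = {T; M, M, K}` be a passive selfadjoint system (so
`T = [[D, C], [C*, F]]` is a selfadjoint contraction on `M ⊕ K`) which is minimal, i.e.
`T` is `M`-simple.  If the transfer function `Ω(z) = D + zC(I − zF)⁻¹C*` takes unitary
values at every point of the unit circle distinct from `±1`, then `T` is unitary. -/
theorem minimal_inner_implies_conservative (D : M →L[ℂ] M) (C : K →L[ℂ] M) (F : K →L[ℂ] K)
    (hD : IsSelfAdjoint D) (hF : IsSelfAdjoint F)
    (hTsa : IsSelfAdjoint (blockOp D C (adjoint C) F))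
    (hTcontr : ‖blockOp D C (adjoint C) F‖ ≤ 1)
    (hmin : Dense (Submodule.span ℂ
      (Set.range fun p : ℕ × M => ((blockOp D C (adjoint C) F) ^ p.1) (inlM p.2)) :
        Set (WithLp 2 (M × K))))
    (hinner : ∀ ξ : ℂ, ‖ξ‖ = 1 → ξ ≠ 1 → ξ ≠ -1 →
      D + ξ • (C ∘L Ring.inverse ((1 : K →L[ℂ] K) - ξ • F) ∘L adjoint C) ∈
        unitary (M →L[ℂ] M)) :
    blockOp D C (adjoint C) F ∈ unitary (WithLp 2 (M × K) →L[ℂ] WithLp 2 (M × K)) :=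
  minimal_inner_implies_conservative_general D C F hF hTsa hTcontr hmin hinner
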